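/- Let ℓ ≥ 1 and let C be a circuit on ℓ qubits over the gate set {H, Z, CZ, CCZ} with unitary U, containing h Hadamard gates, and set n = h + ℓ. Then there exists a multilinear polynomial f over F₂ in n variables of total degree at most 3 such that for every pair x, y ∈ (Fin ℓ → ZMod 2) there is a multilinear polynomial L_{x,y} of total degree at most 1 with ⟨x| H^{⊗ℓ} U H^{⊗ℓ} |y⟩ = gap(f + L_{x,y}) / 2^{h/2 + ℓ}. -/

import Mathlib

open MvPolynomial

/-- Gates on `ℓ` qubits from the set {H, Z, CZ, CCZ}. -/
inductive Gate (ℓ : ℕ) where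
  | H (i : Fin ℓ)
  | Z (i : Fin ℓ)
  | CZ (i j : Fin ℓ)
  | CCZ (i j k : Fin ℓ)

/-- Well-formedness: the control/target qubits of CZ and CCZ gates are distinct. -/
def Gate.wf {ℓ : ℕ} : Gate ℓ → Prop
  | .H _ => True
  | .Z _ => True
  | .CZ i j => i ≠ j
  | .CCZ i j k => i ≠ j ∧ i ≠ k ∧ j ≠ k

/-- The unitary matrix corresponding to a gate. -/
noncomputable def gateMatrix {ℓ : ℕ} : Gate ℓ → Matrix (Fin ℓ → ZMod 2) (Fin ℓ → ZMod 2) ℂ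
  | .H i => fun x y =>
      if ∀ j, j ≠ i → x j = y j then (-1 : ℂ) ^ ((x i * y i : ZMod 2)).val / (Real.sqrt 2 : ℂ)
      else 0
  | .Z i => Matrix.diagonal fun x => (-1 : ℂ) ^ ((x i : ZMod 2)).val
  | .CZ i j => Matrix.diagonal fun x => (-1 : ℂ) ^ ((x i * x j : ZMod 2)).val
  | .CCZ i j k => Matrix.diagonal fun x => (-1 : ℂ) ^ ((x i * x j * x k : ZMod 2)).val

/-- The number of Hadamard gates in a circuit (a list of gates). -/
def hadCount {ℓ : ℕ} (C : List (Gate ℓ)) : ℕ :=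
  C.countP fun g => match g with | .H _ => true | _ => false

/-- The `ℓ`-fold tensor power of the Hadamard matrix, with entries `(−1)^(x·y) / 2^(ℓ/2)`. -/
noncomputable def Hpow (ℓ : ℕ) : Matrix (Fin ℓ → ZMod 2) (Fin ℓ → ZMod 2) ℂ :=
  fun x y => (-1 : ℂ) ^ ((∑ i, x i * y i : ZMod 2)).val / (Real.sqrt 2 : ℂ) ^ ℓ

/-- `gap g` is the number of inputs on which `g` evaluates to `0` minus the number of inputs on
which it evaluates to `1`. -/
def gap {T : Type*} [Fintype T] [DecidableEq T] (g : (T → ZMod 2) → ZMod 2) : ℤ :=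
  ∑ x : T → ZMod 2, (-1 : ℤ) ^ (g x).val

/-!
Sum over paths. Reading the circuit as a product of gate matrices, a Hadamard gate on qubit `i`
turns the input bit of that qubit into a fresh summation variable `b`, with weight
`(-1) ^ (zᵢ b) / √2`, while `Z`, `CZ`, `CCZ` multiply the phase by `(-1) ^ m` for a monomial `m`
in at most three distinct variables. Hence `U z w` is `2^(-h/2)` times a signed sum over the `h`
Hadamard variables `v` of `(-1) ^ f(v, z)`, restricted to the paths whose output, a tuple of
variables, equals `w`. Sandwiching between `H^{⊗ℓ}` sums over `z` and `w`: the sum over `w`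
absorbs the restriction, and both layers contribute only the linear phase `x·z + w·y`.
-/

open Function

lemma neg_one_pow_val_add {R : Type*} [Ring R] (a b : ZMod 2) :
    (-1 : R) ^ (a + b).val = (-1) ^ a.val * (-1) ^ b.val := by
  rw [ZMod.val_add, ← neg_one_pow_eq_pow_mod_two, pow_add]

section Degrees

variable {R σ τ : Type*} [CommSemiring R] [Nontrivial R] [DecidableEq σ]

lemma degreeOf_X_mul_X_le_one {a b : σ} (hab : a ≠ b) (j : σ) :
    degreeOf j (X a * X b : MvPolynomial σ R) ≤ 1 := by
  refine (degreeOf_mul_le _ _ _).trans ?_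
  simp only [degreeOf_X]
  split_ifs <;> simp_all

lemma degreeOf_X_mul_X_mul_X_le_one {a b c : σ} (hab : a ≠ b) (hac : a ≠ c) (hbc : b ≠ c)
    (j : σ) : degreeOf j (X a * X b * X c : MvPolynomial σ R) ≤ 1 := by
  refine (degreeOf_mul_le _ _ _).trans ?_
  refine (Nat.add_le_add_right (degreeOf_mul_le _ _ _) _).trans ?_
  simp only [degreeOf_X]
  split_ifs <;> simp_all

omit [Nontrivial R] [DecidableEq σ] in
lemma degreeOf_rename_le_of_injective {f : σ → τ} (hf : Injective f) {p : MvPolynomial σ R}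
    {n : ℕ} (hp : ∀ i, p.degreeOf i ≤ n) (j : τ) : (rename f p).degreeOf j ≤ n := by
  classical
  by_cases hj : j ∈ Set.range f
  · obtain ⟨i, rfl⟩ := hj
    rw [degreeOf_rename_of_injective hf]
    exact hp i
  · rw [degreeOf_le_iff]
    intro m hm
    rw [support_rename_of_injective hf, Finset.mem_image] at hm
    obtain ⟨m, -, rfl⟩ := hm
    rw [Finsupp.mapDomain_of_notMem_range _ _ hj]
    exact Nat.zero_le n

end Degrees

section PathSum

variable {ℓ h : ℕ}

/-- Path-sum form of a matrix: the variables `Sum.inl` are the path variables and the variables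
`Sum.inr` the input bits `z`; output qubit `q` carries the variable `σ q`. -/
def IsPathSum (M : Matrix (Fin ℓ → ZMod 2) (Fin ℓ → ZMod 2) ℂ)
    (f : MvPolynomial (Fin h ⊕ Fin ℓ) (ZMod 2)) (σ : Fin ℓ → Fin h ⊕ Fin ℓ) : Prop :=
  ∀ z w, M z w = (∑ v : Fin h → ZMod 2,
      if Sum.elim v z ∘ σ = w then (-1 : ℂ) ^ (eval (Sum.elim v z) f).val else 0)
    / (Real.sqrt 2 : ℂ) ^ h

lemma isPathSum_one : IsPathSum (1 : Matrix (Fin ℓ → ZMod 2) (Fin ℓ → ZMod 2) ℂ)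
    (0 : MvPolynomial (Fin 0 ⊕ Fin ℓ) (ZMod 2)) Sum.inr := by
  intro z w
  simp [Matrix.one_apply]

noncomputable def phaseMatrix (p : MvPolynomial (Fin ℓ) (ZMod 2)) :
    Matrix (Fin ℓ → ZMod 2) (Fin ℓ → ZMod 2) ℂ :=
  Matrix.diagonal fun x => (-1 : ℂ) ^ (eval x p).val

lemma gateMatrix_Z (i : Fin ℓ) : gateMatrix (.Z i) = phaseMatrix (X i) := by
  simp [gateMatrix, phaseMatrix]

lemma gateMatrix_CZ (i j : Fin ℓ) : gateMatrix (.CZ i j) = phaseMatrix (X i * X j) := by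
  simp [gateMatrix, phaseMatrix]

lemma gateMatrix_CCZ (i j k : Fin ℓ) :
    gateMatrix (.CCZ i j k) = phaseMatrix (X i * X j * X k) := by
  simp [gateMatrix, phaseMatrix]

lemma IsPathSum.phaseMatrix_mul {M : Matrix (Fin ℓ → ZMod 2) (Fin ℓ → ZMod 2) ℂ}
    {f : MvPolynomial (Fin h ⊕ Fin ℓ) (ZMod 2)} {σ : Fin ℓ → Fin h ⊕ Fin ℓ}
    (hM : IsPathSum M f σ) (p : MvPolynomial (Fin ℓ) (ZMod 2)) :
    IsPathSum (phaseMatrix p * M) (f + rename Sum.inr p) σ := by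
  intro z w
  rw [phaseMatrix, Matrix.diagonal_mul, hM, mul_div_assoc', Finset.mul_sum]
  congr 1
  refine Finset.sum_congr rfl fun v _ => ?_
  rw [mul_ite, mul_zero, map_add, eval_rename, Sum.elim_comp_inr, neg_one_pow_val_add, mul_comm]

/-- After a Hadamard gate on qubit `i`, the old input variable of qubit `i` becomes the new path
variable `0`. -/
def hadamardRename (i : Fin ℓ) : Fin h ⊕ Fin ℓ → Fin (h + 1) ⊕ Fin ℓ :=
  Sum.elim (Sum.inl ∘ Fin.succ) fun j => if j = i then Sum.inl 0 else Sum.inr j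

lemma hadamardRename_injective (i : Fin ℓ) : Injective (hadamardRename (h := h) i) := by
  rintro (k | j) (k' | j') hkj <;>
    simp only [hadamardRename, Sum.elim_inl, Sum.elim_inr, comp_apply] at hkj <;> grind

lemma sum_elim_cons_comp_hadamardRename (i : Fin ℓ) (b : ZMod 2) (v : Fin h → ZMod 2)
    (z : Fin ℓ → ZMod 2) :
    Sum.elim (Fin.cons b v : Fin (h + 1) → ZMod 2) z ∘ hadamardRename i
      = Sum.elim v (update z i b) := by
  ext (k | j)
  · simp [hadamardRename]
  · by_cases hj : j = i <;> simp [hadamardRename, hj]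

lemma gateMatrix_H_mul_apply (i : Fin ℓ) (M : Matrix (Fin ℓ → ZMod 2) (Fin ℓ → ZMod 2) ℂ)
    (z w : Fin ℓ → ZMod 2) :
    (gateMatrix (.H i) * M) z w
      = ∑ b : ZMod 2, (-1 : ℂ) ^ (z i * b).val / Real.sqrt 2 * M (update z i b) w := by
  have hrow : Finset.univ.filter (fun u => ∀ j, j ≠ i → z j = u j)
      = Finset.univ.image (update z i) := by
    ext u
    simp [update_eq_iff]
  rw [Matrix.mul_apply]
  simp only [gateMatrix, ite_mul, zero_mul]
  rw [← Finset.sum_filter, hrow, Finset.sum_image fun _ _ _ _ h => update_injective z i h]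
  simp

lemma IsPathSum.hadamard_mul {M : Matrix (Fin ℓ → ZMod 2) (Fin ℓ → ZMod 2) ℂ}
    {f : MvPolynomial (Fin h ⊕ Fin ℓ) (ZMod 2)} {σ : Fin ℓ → Fin h ⊕ Fin ℓ}
    (hM : IsPathSum M f σ) (i : Fin ℓ) :
    IsPathSum (gateMatrix (.H i) * M)
      (rename (hadamardRename i) f + X (Sum.inr i) * X (Sum.inl 0)) (hadamardRename i ∘ σ) := by
  intro z w
  rw [gateMatrix_H_mul_apply, ← (Fin.consEquiv fun _ => ZMod 2).sum_comp, Fintype.sum_prod_type,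
    Finset.sum_div]
  refine Finset.sum_congr rfl fun b _ => ?_
  rw [hM, mul_div_assoc', Finset.mul_sum, Finset.sum_div, Finset.sum_div]
  refine Finset.sum_congr rfl fun v _ => ?_
  have hcons : (Fin.consEquiv fun _ => ZMod 2) (b, v) = Fin.cons b v := rfl
  simp only [hcons, ← comp_assoc, map_add, map_mul, eval_rename, eval_X,
    sum_elim_cons_comp_hadamardRename, Sum.elim_inl, Sum.elim_inr, Fin.cons_zero]
  rw [neg_one_pow_val_add]
  split_ifs <;> ring

def HasCubicPathSum (M : Matrix (Fin ℓ → ZMod 2) (Fin ℓ → ZMod 2) ℂ) (h : ℕ) : Prop :=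
  ∃ (f : MvPolynomial (Fin h ⊕ Fin ℓ) (ZMod 2)) (σ : Fin ℓ → Fin h ⊕ Fin ℓ),
    (∀ j, f.degreeOf j ≤ 1) ∧ f.totalDegree ≤ 3 ∧ IsPathSum M f σ

lemma hasCubicPathSum_one : HasCubicPathSum (1 : Matrix (Fin ℓ → ZMod 2) (Fin ℓ → ZMod 2) ℂ) 0 :=
  ⟨0, Sum.inr, by simp, by simp, isPathSum_one⟩

lemma HasCubicPathSum.phaseMatrix_mul {M : Matrix (Fin ℓ → ZMod 2) (Fin ℓ → ZMod 2) ℂ}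
    (hM : HasCubicPathSum M h) {p : MvPolynomial (Fin ℓ) (ZMod 2)}
    (hp₁ : ∀ j, p.degreeOf j ≤ 1) (hp₃ : p.totalDegree ≤ 3) :
    HasCubicPathSum (phaseMatrix p * M) h := by
  obtain ⟨f, σ, hf₁, hf₃, hf⟩ := hM
  refine ⟨f + rename Sum.inr p, σ, fun j => ?_, ?_, hf.phaseMatrix_mul p⟩
  · exact (degreeOf_add_le _ _ _).trans
      (max_le (hf₁ j) (degreeOf_rename_le_of_injective Sum.inr_injective hp₁ j))
  · exact (totalDegree_add _ _).trans (max_le hf₃ ((totalDegree_rename_le _ _).trans hp₃))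

lemma HasCubicPathSum.hadamard_mul {M : Matrix (Fin ℓ → ZMod 2) (Fin ℓ → ZMod 2) ℂ}
    (hM : HasCubicPathSum M h) (i : Fin ℓ) : HasCubicPathSum (gateMatrix (.H i) * M) (h + 1) := by
  obtain ⟨f, σ, hf₁, hf₃, hf⟩ := hM
  refine ⟨_, _, fun j => ?_, ?_, hf.hadamard_mul i⟩
  · exact (degreeOf_add_le _ _ _).trans
      (max_le (degreeOf_rename_le_of_injective (hadamardRename_injective i) hf₁ j)
        (degreeOf_X_mul_X_le_one Sum.inr_ne_inl j))
  · refine (totalDegree_add _ _).trans (max_le ((totalDegree_rename_le _ _).trans hf₃) ?_)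
    exact (totalDegree_mul _ _).trans (by simp)

end PathSum

lemma hasCubicPathSum_circuit {ℓ : ℕ} (C : List (Gate ℓ)) (hwf : ∀ g ∈ C, g.wf) :
    HasCubicPathSum (C.map gateMatrix).prod (hadCount C) := by
  induction C with
  | nil => exact hasCubicPathSum_one
  | cons g C ih =>
    have hC := ih fun g hg => hwf g (List.mem_cons_of_mem _ hg)
    have hg := hwf g List.mem_cons_self
    rw [List.map_cons, List.prod_cons]
    cases g with
    | H i =>
      rw [show hadCount (.H i :: C) = hadCount C + 1 by simp [hadCount]]
      exact hC.hadamard_mul i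
    | Z i =>
      rw [show hadCount (.Z i :: C) = hadCount C by simp [hadCount], gateMatrix_Z]
      exact hC.phaseMatrix_mul (fun j => (degreeOf_le_totalDegree _ j).trans (by simp))
        (by simp)
    | CZ i j =>
      rw [show hadCount (.CZ i j :: C) = hadCount C by simp [hadCount], gateMatrix_CZ]
      exact hC.phaseMatrix_mul (degreeOf_X_mul_X_le_one hg)
        ((totalDegree_mul _ _).trans (by simp))
    | CCZ i j k =>
      obtain ⟨hij, hik, hjk⟩ := hg
      rw [show hadCount (.CCZ i j k :: C) = hadCount C by simp [hadCount], gateMatrix_CCZ]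
      exact hC.phaseMatrix_mul (degreeOf_X_mul_X_mul_X_le_one hij hik hjk)
        (((totalDegree_mul _ _).trans (Nat.add_le_add_right (totalDegree_mul _ _) _)).trans
          (by simp))

lemma gap_eq_sum_sum_elim {α β : Type*} [Fintype α] [Fintype β] [DecidableEq α] [DecidableEq β]
    (g : (α ⊕ β → ZMod 2) → ZMod 2) :
    (gap g : ℂ) = ∑ v : α → ZMod 2, ∑ z : β → ZMod 2, (-1 : ℂ) ^ (g (Sum.elim v z)).val := by
  rw [gap, ← (Equiv.sumArrowEquivProdArrow α β (ZMod 2)).symm.sum_comp, Fintype.sum_prod_type]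
  push_cast
  rfl

lemma gap_eval_rename_equiv {σ τ : Type*} [Fintype σ] [Fintype τ] [DecidableEq σ]
    [DecidableEq τ] (e : σ ≃ τ) (p : MvPolynomial σ (ZMod 2)) :
    gap (fun u => eval u (rename e p)) = gap (fun u => eval u p) := by
  simp only [gap, eval_rename]
  exact Fintype.sum_equiv (e.arrowCongr (Equiv.refl _)).symm _ _ fun u => rfl

section HadamardConjugation

variable {ℓ h : ℕ}

lemma Hpow_apply_mul_Hpow_apply (x z w y : Fin ℓ → ZMod 2) :
    Hpow ℓ x z * Hpow ℓ w y = (-1 : ℂ) ^ (∑ q, x q * z q + ∑ q, w q * y q).val / 2 ^ ℓ := by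
  have hsqrt : (Real.sqrt 2 : ℂ) * Real.sqrt 2 = 2 := by
    rw [← Complex.ofReal_mul, Real.mul_self_sqrt zero_le_two]
    norm_num
  rw [Hpow, Hpow, div_mul_div_comm, ← mul_pow, hsqrt, neg_one_pow_val_add]

/-- The linear phase `x·z + w·y` of the outer Hadamard layers, `z` being the input bits and
`w = Sum.elim v z ∘ σ` the output of a path. -/
noncomputable def boundaryPhase (x y : Fin ℓ → ZMod 2) (σ : Fin ℓ → Fin h ⊕ Fin ℓ) :
    MvPolynomial (Fin h ⊕ Fin ℓ) (ZMod 2) :=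
  ∑ q, C (x q) * X (Sum.inr q) + ∑ q, X (σ q) * C (y q)

lemma totalDegree_boundaryPhase_le (x y : Fin ℓ → ZMod 2) (σ : Fin ℓ → Fin h ⊕ Fin ℓ) :
    (boundaryPhase x y σ).totalDegree ≤ 1 := by
  refine (totalDegree_add _ _).trans (max_le ?_ ?_) <;>
    refine (totalDegree_finsetSum _ _).trans
      (Finset.sup_le fun q _ => (totalDegree_mul _ _).trans ?_) <;>
    simp

lemma eval_boundaryPhase (x y : Fin ℓ → ZMod 2) (σ : Fin ℓ → Fin h ⊕ Fin ℓ)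
    (v : Fin h → ZMod 2) (z : Fin ℓ → ZMod 2) :
    eval (Sum.elim v z) (boundaryPhase x y σ)
      = ∑ q, x q * z q + ∑ q, (Sum.elim v z ∘ σ) q * y q := by
  simp [boundaryPhase]

theorem IsPathSum.Hpow_mul_mul_Hpow_apply {M : Matrix (Fin ℓ → ZMod 2) (Fin ℓ → ZMod 2) ℂ}
    {f : MvPolynomial (Fin h ⊕ Fin ℓ) (ZMod 2)} {σ : Fin ℓ → Fin h ⊕ Fin ℓ}
    (hM : IsPathSum M f σ) (x y : Fin ℓ → ZMod 2) :
    (Hpow ℓ * M * Hpow ℓ) x y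
      = (gap (fun u => eval u (f + boundaryPhase x y σ)) : ℂ)
          / ((Real.sqrt 2 : ℂ) ^ h * 2 ^ ℓ) := by
  have hrow : ∀ z, ∑ w, M z w * Hpow ℓ w y = ∑ v : Fin h → ZMod 2,
      (-1 : ℂ) ^ (eval (Sum.elim v z) f).val * Hpow ℓ (Sum.elim v z ∘ σ) y
        / (Real.sqrt 2 : ℂ) ^ h := by
    intro z
    simp only [hM z, Finset.sum_div, Finset.sum_mul]
    rw [Finset.sum_comm]
    refine Finset.sum_congr rfl fun v _ => ?_
    simp [ite_div, ite_mul, Finset.sum_ite_eq, div_mul_eq_mul_div]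
  calc (Hpow ℓ * M * Hpow ℓ) x y = ∑ z, Hpow ℓ x z * ∑ w, M z w * Hpow ℓ w y := by
        simp only [Matrix.mul_apply, Finset.sum_mul, Finset.mul_sum, mul_assoc]
        exact Finset.sum_comm
    _ = ∑ z, ∑ v : Fin h → ZMod 2, (-1 : ℂ) ^ (eval (Sum.elim v z)
          (f + boundaryPhase x y σ)).val / ((Real.sqrt 2 : ℂ) ^ h * 2 ^ ℓ) := by
        refine Finset.sum_congr rfl fun z _ => ?_
        rw [hrow, Finset.mul_sum]
        refine Finset.sum_congr rfl fun v _ => ?_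
        rw [map_add, eval_boundaryPhase, neg_one_pow_val_add]
        linear_combination (-1 : ℂ) ^ (eval (Sum.elim v z) f).val / (Real.sqrt 2 : ℂ) ^ h *
          Hpow_apply_mul_Hpow_apply x z (Sum.elim v z ∘ σ) y
    _ = _ := by
        rw [gap_eq_sum_sum_elim, Finset.sum_comm, Finset.sum_div]
        simp only [Finset.sum_div]

end HadamardConjugation

theorem all_amplitudes_polynomial_general (ℓ : ℕ) (C : List (Gate ℓ))
    (hwf : ∀ g ∈ C, g.wf) :
    ∃ f : MvPolynomial (Fin (hadCount C + ℓ)) (ZMod 2),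
      (∀ i, f.degreeOf i ≤ 1) ∧ f.totalDegree ≤ 3 ∧
      ∀ x y : Fin ℓ → ZMod 2,
        ∃ L : MvPolynomial (Fin (hadCount C + ℓ)) (ZMod 2),
          (∀ i, L.degreeOf i ≤ 1) ∧ L.totalDegree ≤ 1 ∧
          (Hpow ℓ * (C.map gateMatrix).prod * Hpow ℓ) x y
            = ((gap fun v => eval v (f + L) : ℤ) : ℂ)
                / ((Real.sqrt 2 : ℂ) ^ hadCount C * 2 ^ ℓ) := by
  obtain ⟨f, σ, hf₁, hf₃, hC⟩ := hasCubicPathSum_circuit C hwf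
  let e : Fin (hadCount C) ⊕ Fin ℓ ≃ Fin (hadCount C + ℓ) := finSumFinEquiv
  have hL₁ : ∀ x y, (rename e (boundaryPhase x y σ)).totalDegree ≤ 1 := fun x y =>
    (totalDegree_rename_le _ _).trans (totalDegree_boundaryPhase_le x y σ)
  refine ⟨rename e f, degreeOf_rename_le_of_injective e.injective hf₁,
    (totalDegree_rename_le _ _).trans hf₃, fun x y => ⟨rename e (boundaryPhase x y σ),
      fun i => (degreeOf_le_totalDegree _ i).trans (hL₁ x y), hL₁ x y, ?_⟩⟩
  rw [hC.Hpow_mul_mul_Hpow_apply, ← map_add, gap_eval_rename_equiv]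

/-- For any circuit `C` on `ℓ ≥ 1` qubits over the gate set {H, Z, CZ, CCZ},
with `h` Hadamard gates and `n = h + ℓ`, there is a multilinear polynomial `f` over `𝔽₂` in `n`
variables of total degree at most 3 such that for every pair `x, y` there is a multilinear
polynomial `L` of total degree at most 1 with
`⟨x| H^{⊗ℓ} U H^{⊗ℓ} |y⟩ = gap(f + L) / 2^(h/2 + ℓ)`. -/
theorem all_amplitudes_polynomial (ℓ : ℕ) (hℓ : 1 ≤ ℓ) (C : List (Gate ℓ))
    (hwf : ∀ g ∈ C, g.wf) :
    ∃ f : MvPolynomial (Fin (hadCount C + ℓ)) (ZMod 2),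
      (∀ i, f.degreeOf i ≤ 1) ∧ f.totalDegree ≤ 3 ∧
      ∀ x y : Fin ℓ → ZMod 2,
        ∃ L : MvPolynomial (Fin (hadCount C + ℓ)) (ZMod 2),
          (∀ i, L.degreeOf i ≤ 1) ∧ L.totalDegree ≤ 1 ∧
          (Hpow ℓ * (C.map gateMatrix).prod * Hpow ℓ) x y
            = ((gap fun v => eval v (f + L) : ℤ) : ℂ)
                / ((Real.sqrt 2 : ℂ) ^ hadCount C * 2 ^ ℓ) :=
  all_amplitudes_polynomial_general ℓ C hwf
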